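/- arXiv:2310.20313 — 6 statements merged into one kernel-verified Lean document; each statement's English description precedes it below -/
import Mathlib

section
/- For real numbers α > 0 and angles β, δ, γ with 0 < β < δ and δ + γ < π and γ > 0, one has 1/sin(δ)^α + 1/sin(β+γ)^α < 1/sin(δ+γ)^α + 1/sin(β)^α. -/
open Real Set

/-! The function `f x = sin x ^ (-α)` is strictly convex on `(0, π)`, being a convex decreasing
function of the strictly concave `sin`. The inequality compares `f δ + f (β + γ)` with
`f β + f (δ + γ)`, where `δ` and `β + γ` lie strictly between `β` and `δ + γ` and have the same
sum; writing them as the two mirror-image convex combinations of the endpoints and adding the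
two strict Jensen inequalities gives the claim. -/

theorem Real.convexOn_rpow_of_nonpos {p : ℝ} (hp : p ≤ 0) :
    ConvexOn ℝ (Ioi 0) fun x : ℝ ↦ x ^ p := by
  refine ⟨convex_Ioi 0, fun x (hx : 0 < x) y (hy : 0 < y) a b ha hb hab ↦ ?_⟩
  simp only [smul_eq_mul]
  have hgeom : x ^ a * y ^ b ≤ a * x + b * y :=
    geom_mean_le_arith_mean2_weighted ha hb hx.le hy.le hab
  calc (a * x + b * y) ^ p ≤ (x ^ a * y ^ b) ^ p :=
        rpow_le_rpow_of_nonpos (by positivity) hgeom hp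
    _ = (x ^ p) ^ a * (y ^ p) ^ b := by
        rw [mul_rpow (by positivity) (by positivity), ← rpow_mul hx.le, ← rpow_mul hy.le,
          mul_comm a, mul_comm b, rpow_mul hx.le, rpow_mul hy.le]
    _ ≤ a * x ^ p + b * y ^ p :=
        geom_mean_le_arith_mean2_weighted ha hb (by positivity) (by positivity) hab

theorem Real.strictConvexOn_sin_rpow_neg {α : ℝ} (hα : 0 < α) :
    StrictConvexOn ℝ (Ioo 0 π) fun x ↦ sin x ^ (-α) := by
  have hsin : sin '' Ioo 0 π ⊆ Ioi 0 := by
    rintro _ ⟨x, hx, rfl⟩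
    exact sin_pos_of_pos_of_lt_pi hx.1 hx.2
  have hconvex : Convex ℝ (sin '' Ioo 0 π) :=
    (isPreconnected_Ioo.image sin continuous_sin.continuousOn).ordConnected.convex
  exact ((convexOn_rpow_of_nonpos (neg_nonpos.2 hα.le)).subset hsin hconvex).comp_strictConcaveOn
    (strictConcaveOn_sin_Icc.subset Ioo_subset_Icc_self (convex_Ioo 0 π))
    ((strictAntiOn_rpow_Ioi_of_exponent_neg (neg_lt_zero.2 hα)).mono hsin)

theorem StrictConvexOn.add_lt_add_of_add_eq {𝕜 : Type*} [Field 𝕜] [LinearOrder 𝕜]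
    [IsStrictOrderedRing 𝕜] {s : Set 𝕜} {f : 𝕜 → 𝕜}
    (hf : StrictConvexOn 𝕜 s f) {a b c d : 𝕜} (ha : a ∈ s) (hd : d ∈ s)
    (hab : a < b) (hbd : b < d) (hsum : b + c = a + d) :
    f b + f c < f a + f d := by
  have hda : 0 < d - a := by linarith
  set t := (d - b) / (d - a)
  have ht : 0 < t := div_pos (by linarith) hda
  have ht' : 0 < 1 - t := by
    rw [sub_pos, div_lt_one hda]; linarith
  have hb : t * a + (1 - t) * d = b := by
    simp only [t]; field_simp; ring
  have hc : (1 - t) * a + t * d = c := by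
    simp only [t]; field_simp; linear_combination (a - d) * hsum
  have had : a ≠ d := (hab.trans hbd).ne
  have hfb := hf.2 ha hd had ht ht' (add_sub_cancel t 1)
  have hfc := hf.2 ha hd had ht' ht (sub_add_cancel 1 t)
  simp only [smul_eq_mul, hb, hc] at hfb hfc
  linarith

/-- For `α > 0` and angles `0 < β < δ`, `γ > 0`, `δ + γ < π`:
`1/sin(δ)^α + 1/sin(β+γ)^α < 1/sin(δ+γ)^α + 1/sin(β)^α`. -/
theorem stmt_2 (α β δ γ : ℝ) (hα : 0 < α) (hβ : 0 < β) (hβδ : β < δ) (hγ : 0 < γ)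
    (hδγ : δ + γ < Real.pi) :
    1 / Real.sin δ ^ α + 1 / Real.sin (β + γ) ^ α <
      1 / Real.sin (δ + γ) ^ α + 1 / Real.sin β ^ α := by
  have hinv : ∀ x ∈ Ioo 0 π, 1 / sin x ^ α = sin x ^ (-α) := fun x hx ↦ by
    rw [rpow_neg (sin_pos_of_pos_of_lt_pi hx.1 hx.2).le, one_div]
  have hβ_mem : β ∈ Ioo 0 π := ⟨hβ, by linarith⟩
  have hδγ_mem : δ + γ ∈ Ioo 0 π := ⟨by linarith, hδγ⟩
  rw [hinv δ ⟨by linarith, by linarith⟩, hinv (β + γ) ⟨by linarith, by linarith⟩,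
    hinv (δ + γ) hδγ_mem, hinv β hβ_mem, add_comm (sin (δ + γ) ^ (-α))]
  exact (strictConvexOn_sin_rpow_neg hα).add_lt_add_of_add_eq hβ_mem hδγ_mem hβδ
    (by linarith) (by ring)
end

section
/- For a cyclic hexagon with vertices 1,…,6 ordered counterclockwise on a circle, and any α > 0: 1/r₁₃^α + 1/r₁₅^α + 1/r₂₄^α + 1/r₂₆^α + 1/r₃₅^α + 1/r₄₆^α < 1/r₁₂^α + 1/r₁₄^α + 1/r₁₆^α + 1/r₂₃^α + 1/r₂₅^α + 1/r₃₄^α + 1/r₃₆^α + 1/r₄₅^α + 1/r₅₆^α. -/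
/-! With half-arcs `x₁, …, x₆ > 0` summing to `π`, a chord spanning the arcs `xᵢ, …, xⱼ` has length
`2 sin (xᵢ + ⋯ + xⱼ)`, and `t ↦ 1 / (2 sin t)^α` is symmetric about `π/2` and decreasing on
`(0, π/2]`. Split the short diagonals into the triangles `13, 35, 51` and `24, 46, 62`. In each the
three spanned half-arcs sum to `π`, so at most one exceeds `π/2`; each other short diagonal is
dominated by a side it spans, the exceptional one by either long diagonal avoiding its middle
vertex. The two triangles can be served by distinct long diagonals, and the third one left over
makes the inequality strict. -/

open Real

noncomputable def invChordPow (α t : ℝ) : ℝ := 1 / (2 * sin t) ^ α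

namespace invChordPow

variable {α s t : ℝ}

lemma pi_sub (α t : ℝ) : invChordPow α (π - t) = invChordPow α t := by
  rw [invChordPow, invChordPow, sin_pi_sub]

lemma pos (ht : 0 < t) (htπ : t < π) : 0 < invChordPow α t :=
  one_div_pos.mpr (rpow_pos_of_pos (by linarith [sin_pos_of_pos_of_lt_pi ht htπ]) α)

lemma antitoneOn (hα : 0 < α) : AntitoneOn (invChordPow α) (Set.Ioc 0 (π / 2)) := by
  intro t ⟨ht, _⟩ s ⟨_, hs⟩ hts
  have hsin_t : 0 < sin t := sin_pos_of_pos_of_lt_pi ht (by linarith [pi_pos])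
  have hsin : sin t ≤ sin s := sin_le_sin_of_le_of_le_pi_div_two (by linarith [pi_pos]) hs hts
  exact one_div_le_one_div_of_le (rpow_pos_of_pos (by linarith) α)
    (rpow_le_rpow (by linarith) (by linarith) hα.le)

lemma le_of_le_pi_sub (hα : 0 < α) (ht : 0 < t) (hts : t ≤ π - s) (hs : π / 2 ≤ s) :
    invChordPow α s ≤ invChordPow α t := by
  rw [← pi_sub α s]
  exact antitoneOn hα ⟨ht, by linarith⟩ ⟨by linarith, by linarith⟩ hts

end invChordPow

def LeTwoOf (c a₁ a₂ a₃ : ℝ) : Prop :=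
  (c ≤ a₁ ∧ c ≤ a₂) ∨ (c ≤ a₂ ∧ c ≤ a₃) ∨ (c ≤ a₃ ∧ c ≤ a₁)

lemma add_lt_of_leTwoOf {c c' a₁ a₂ a₃ : ℝ} (h₁ : 0 < a₁) (h₂ : 0 < a₂) (h₃ : 0 < a₃)
    (hc : LeTwoOf c a₁ a₂ a₃) (hc' : LeTwoOf c' a₂ a₃ a₁) : c + c' < a₁ + a₂ + a₃ := by
  unfold LeTwoOf at hc hc'
  rcases hc with ⟨_, _⟩ | ⟨_, _⟩ | ⟨_, _⟩ <;> rcases hc' with ⟨_, _⟩ | ⟨_, _⟩ | ⟨_, _⟩ <;> linarith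

open invChordPow in
lemma leTwoOf_invChordPow_triangle {α x₁ x₂ x₃ x₄ x₅ x₆ : ℝ} (hα : 0 < α)
    (h₁ : 0 < x₁) (h₂ : 0 < x₂) (h₃ : 0 < x₃) (h₄ : 0 < x₄) (h₅ : 0 < x₅) (h₆ : 0 < x₆)
    (hsum : x₁ + x₂ + x₃ + x₄ + x₅ + x₆ = π) :
    LeTwoOf (invChordPow α (x₁ + x₂) + invChordPow α (x₃ + x₄) + invChordPow α (x₅ + x₆) -
        (invChordPow α x₁ + invChordPow α x₃ + invChordPow α x₅))
      (invChordPow α (x₁ + x₂ + x₃)) (invChordPow α (x₂ + x₃ + x₄))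
      (invChordPow α (x₃ + x₄ + x₅)) := by
  have hx₁ := pos (α := α) h₁ (by linarith)
  have hx₃ := pos (α := α) h₃ (by linarith)
  have hx₅ := pos (α := α) h₅ (by linarith)
  have hT₁ := pos (α := α) (t := x₁ + x₂ + x₃) (by linarith) (by linarith)
  have hT₂ := pos (α := α) (t := x₂ + x₃ + x₄) (by linarith) (by linarith)
  have hT₃ := pos (α := α) (t := x₃ + x₄ + x₅) (by linarith) (by linarith)
  have side_le {a b : ℝ} (ha : 0 < a) (hb : 0 < b) (hab : a + b ≤ π / 2) :
      invChordPow α (a + b) ≤ invChordPow α a :=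
    antitoneOn hα ⟨ha, by linarith⟩ ⟨by linarith, hab⟩ (by linarith)
  unfold LeTwoOf
  by_cases big₁ : π / 2 ≤ x₁ + x₂
  · have := side_le h₃ h₄ (by linarith)
    have := side_le h₅ h₆ (by linarith)
    have := le_of_le_pi_sub hα (t := x₃ + x₄ + x₅) (by linarith) (by linarith) big₁
    have := le_of_le_pi_sub hα (t := x₄ + x₅ + x₆) (by linarith) (by linarith) big₁
    rw [show x₄ + x₅ + x₆ = π - (x₁ + x₂ + x₃) by linarith, pi_sub] at this
    right; right; constructor <;> linarith
  have := side_le h₁ h₂ (by linarith)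
  by_cases big₃ : π / 2 ≤ x₃ + x₄
  · have := side_le h₅ h₆ (by linarith)
    have := le_of_le_pi_sub hα (t := x₅ + x₆ + x₁) (by linarith) (by linarith) big₃
    rw [show x₅ + x₆ + x₁ = π - (x₂ + x₃ + x₄) by linarith, pi_sub] at this
    have := le_of_le_pi_sub hα (t := x₆ + x₁ + x₂) (by linarith) (by linarith) big₃
    rw [show x₆ + x₁ + x₂ = π - (x₃ + x₄ + x₅) by linarith, pi_sub] at this
    right; left; constructor <;> linarith
  have := side_le h₃ h₄ (by linarith)
  by_cases big₅ : π / 2 ≤ x₅ + x₆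
  · have := le_of_le_pi_sub hα (t := x₁ + x₂ + x₃) (by linarith) (by linarith) big₅
    have := le_of_le_pi_sub hα (t := x₂ + x₃ + x₄) (by linarith) (by linarith) big₅
    left; constructor <;> linarith
  have := side_le h₅ h₆ (by linarith)
  left; constructor <;> linarith

open invChordPow in
lemma invChordPow_hexagon {α x₁ x₂ x₃ x₄ x₅ : ℝ} (hα : 0 < α)
    (h₁ : 0 < x₁) (h₂ : 0 < x₂) (h₃ : 0 < x₃) (h₄ : 0 < x₄) (h₅ : 0 < x₅)
    (hsum : x₁ + x₂ + x₃ + x₄ + x₅ < π) :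
    invChordPow α (x₁ + x₂) + invChordPow α (x₁ + x₂ + x₃ + x₄) + invChordPow α (x₂ + x₃) +
        invChordPow α (x₂ + x₃ + x₄ + x₅) + invChordPow α (x₃ + x₄) + invChordPow α (x₄ + x₅) <
      invChordPow α x₁ + invChordPow α (x₁ + x₂ + x₃) +
        invChordPow α (x₁ + x₂ + x₃ + x₄ + x₅) + invChordPow α x₂ +
        invChordPow α (x₂ + x₃ + x₄) + invChordPow α x₃ + invChordPow α (x₃ + x₄ + x₅) +
        invChordPow α x₄ + invChordPow α x₅ := by
  obtain ⟨x₆, hx₆⟩ : ∃ x₆, x₁ + x₂ + x₃ + x₄ + x₅ + x₆ = π := ⟨_, add_sub_cancel _ π⟩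
  have h₆ : 0 < x₆ := by linarith
  have odd := leTwoOf_invChordPow_triangle hα h₁ h₂ h₃ h₄ h₅ h₆ (by linarith)
  have even := leTwoOf_invChordPow_triangle hα h₂ h₃ h₄ h₅ h₆ h₁ (by linarith)
  rw [show x₄ + x₅ + x₆ = π - (x₁ + x₂ + x₃) by linarith, pi_sub] at even
  have := add_lt_of_leTwoOf (pos (by linarith) (by linarith)) (pos (by linarith) (by linarith))
    (pos (by linarith) (by linarith)) odd even
  rw [show x₁ + x₂ + x₃ + x₄ + x₅ = π - x₆ by linarith,
    show x₁ + x₂ + x₃ + x₄ = π - (x₅ + x₆) by linarith,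
    show x₂ + x₃ + x₄ + x₅ = π - (x₆ + x₁) by linarith, pi_sub, pi_sub, pi_sub]
  linarith

/-- For a cyclic hexagon with vertices at angles `0 ≤ θ₁ < … < θ₆ < 2π` on the unit
circle, chord lengths `r_{jk} = 2 sin((θ_k − θ_j)/2)`, and any `α > 0`:
`1/r₁₃^α + 1/r₁₅^α + 1/r₂₄^α + 1/r₂₆^α + 1/r₃₅^α + 1/r₄₆^α <`
`1/r₁₂^α + 1/r₁₄^α + 1/r₁₆^α + 1/r₂₃^α + 1/r₂₅^α + 1/r₃₄^α + 1/r₃₆^α + 1/r₄₅^α + 1/r₅₆^α`. -/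
theorem stmt_9 (α θ₁ θ₂ θ₃ θ₄ θ₅ θ₆ : ℝ) (hα : 0 < α)
    (h0 : 0 ≤ θ₁) (h12 : θ₁ < θ₂) (h23 : θ₂ < θ₃) (h34 : θ₃ < θ₄)
    (h45 : θ₄ < θ₅) (h56 : θ₅ < θ₆) (h6 : θ₆ < 2 * Real.pi)
    (r : ℝ → ℝ → ℝ) (hr : ∀ x y, r x y = 2 * Real.sin ((y - x) / 2)) :
    1 / r θ₁ θ₃ ^ α + 1 / r θ₁ θ₅ ^ α + 1 / r θ₂ θ₄ ^ α + 1 / r θ₂ θ₆ ^ α +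
      1 / r θ₃ θ₅ ^ α + 1 / r θ₄ θ₆ ^ α <
    1 / r θ₁ θ₂ ^ α + 1 / r θ₁ θ₄ ^ α + 1 / r θ₁ θ₆ ^ α + 1 / r θ₂ θ₃ ^ α +
      1 / r θ₂ θ₅ ^ α + 1 / r θ₃ θ₄ ^ α + 1 / r θ₃ θ₆ ^ α + 1 / r θ₄ θ₅ ^ α +
      1 / r θ₅ θ₆ ^ α := by
  have key := invChordPow_hexagon hα (x₁ := (θ₂ - θ₁) / 2) (x₂ := (θ₃ - θ₂) / 2)
    (x₃ := (θ₄ - θ₃) / 2) (x₄ := (θ₅ - θ₄) / 2) (x₅ := (θ₆ - θ₅) / 2)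
    (by linarith) (by linarith) (by linarith) (by linarith) (by linarith) (by linarith)
  simp only [hr]
  unfold invChordPow at key
  -- the arc sums in `key` telescope to the half-angles `(θₖ - θⱼ) / 2` of the goal
  ring_nf at key ⊢
  exact key
end

section
/- The decomposition identity for the 2n-gon parity sum: with R and S defined as below, R(G{1,2,…,2n}) = R(G{3,4,…,2n}) + Σ_{j=2}^{n} S(G{1,2,2j−1,2j}) − 1/r₁₂^α, where S(G{i₁,i₂,i₃,i₄}) = 1/r_{i₁i₃}^α + 1/r_{i₂i₄}^α − 1/r_{i₂i₃}^α − 1/r_{i₁i₄}^α. -/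
/-!
Adjoining a point smaller than every point of `A` to `A` adds to `R(G A)` exactly the signed
weights of the new edges. Adjoining `2` and then `1` to `{3, …, 2n}` therefore adds the edge
`{1, 2}` (odd–even, hence `-r₁₂^{-α}`) and the edges from `1` and `2` to the rest; grouping the
latter by consecutive pairs `{2j - 1, 2j}` gives the `S` terms.
-/

open Finset

def parityWeight (w : ℕ → ℕ → ℝ) (p s : ℕ) : ℝ :=
  if p % 2 = s % 2 then w p s else -w p s

/-- `R(G A)`. Parity is that of the labels themselves, which agrees with the parity of the
positions in the sorted list whenever `A` is a set of consecutive integers. -/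
def paritySum (w : ℕ → ℕ → ℝ) (A : Finset ℕ) : ℝ :=
  ∑ p ∈ A, ∑ s ∈ A with p < s, parityWeight w p s

lemma sum_filter_parity_sub_eq_paritySum (w : ℕ → ℕ → ℝ) (A : Finset ℕ) :
    (∑ q ∈ (A ×ˢ A).filter (fun q => q.1 < q.2 ∧ q.1 % 2 = q.2 % 2), w q.1 q.2) -
      ∑ q ∈ (A ×ˢ A).filter (fun q => q.1 < q.2 ∧ q.1 % 2 ≠ q.2 % 2), w q.1 q.2 =
    paritySum w A := by
  rw [sum_filter, sum_filter, ← sum_sub_distrib, sum_product, paritySum]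
  refine sum_congr rfl fun p _ => ?_
  rw [sum_filter]
  refine sum_congr rfl fun s _ => ?_
  by_cases hps : p < s <;> by_cases hmod : p % 2 = s % 2 <;> simp [parityWeight, hps, hmod]

lemma paritySum_insert_of_lt (w : ℕ → ℕ → ℝ) {a : ℕ} {A : Finset ℕ} (ha : ∀ s ∈ A, a < s) :
    paritySum w (insert a A) = paritySum w A + ∑ s ∈ A, parityWeight w a s := by
  have haA : a ∉ A := fun h => lt_irrefl a (ha a h)
  rw [paritySum, sum_insert haA, filter_insert, if_neg (lt_irrefl a), filter_true_of_mem ha,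
    add_comm, paritySum]
  congr 1
  exact sum_congr rfl fun p hp => by rw [filter_insert, if_neg (ha p hp).not_gt]

lemma sum_Icc_three_two_mul {M : Type*} [AddCommMonoid M] (f : ℕ → M) (n : ℕ) :
    ∑ s ∈ Icc 3 (2 * n), f s = ∑ j ∈ Icc 2 n, (f (2 * j - 1) + f (2 * j)) := by
  induction n with
  | zero => rfl
  | succ m ih =>
    rcases Nat.eq_zero_or_pos m with rfl | hm
    · rfl
    rw [show 2 * (m + 1) = 2 * m + 1 + 1 by ring, sum_Icc_succ_top (by omega),
      sum_Icc_succ_top (by omega), ih, sum_Icc_succ_top (by omega : 2 ≤ m + 1), add_assoc,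
      show 2 * (m + 1) - 1 = 2 * m + 1 by omega, show 2 * (m + 1) = 2 * m + 1 + 1 by ring]

lemma paritySum_Icc_one (w : ℕ → ℕ → ℝ) {n : ℕ} (hn : 1 ≤ n) :
    paritySum w (Icc 1 (2 * n)) =
      paritySum w (Icc 3 (2 * n)) +
        ∑ j ∈ Icc 2 n, (w 1 (2 * j - 1) + w 2 (2 * j) - w 2 (2 * j - 1) - w 1 (2 * j)) -
        w 1 2 := by
  have hIcc : Icc 1 (2 * n) = insert 1 (insert 2 (Icc 3 (2 * n))) := by
    ext s
    simp only [mem_Icc, mem_insert]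
    omega
  have hblock : ∀ j ∈ Icc 2 n,
      parityWeight w 1 (2 * j - 1) + parityWeight w 1 (2 * j) +
          (parityWeight w 2 (2 * j - 1) + parityWeight w 2 (2 * j)) =
        w 1 (2 * j - 1) + w 2 (2 * j) - w 2 (2 * j - 1) - w 1 (2 * j) := fun j hj => by
    rw [mem_Icc] at hj
    simp only [parityWeight, if_pos (show 1 % 2 = (2 * j - 1) % 2 by omega),
      if_neg (show 1 % 2 ≠ 2 * j % 2 by omega), if_neg (show 2 % 2 ≠ (2 * j - 1) % 2 by omega),
      if_pos (show 2 % 2 = 2 * j % 2 by omega)]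
    ring
  have hw12 : parityWeight w 1 2 = -w 1 2 := if_neg (by decide)
  rw [hIcc, paritySum_insert_of_lt w (by simp +contextual only [mem_insert, mem_Icc]; omega),
    paritySum_insert_of_lt w (by simp only [mem_Icc]; omega), sum_insert (by simp),
    sum_Icc_three_two_mul, sum_Icc_three_two_mul, ← sum_congr rfl hblock, hw12]
  simp only [sum_add_distrib]
  ring

theorem stmt_10_general (n : ℕ) (hn : 2 ≤ n) (α : ℝ) (r : ℕ → ℕ → ℝ) :
    ((∑ q ∈ ((Finset.Icc 1 (2 * n)) ×ˢ (Finset.Icc 1 (2 * n))).filter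
        (fun q => q.1 < q.2 ∧ q.1 % 2 = q.2 % 2), r q.1 q.2 ^ (-α)) -
      ∑ q ∈ ((Finset.Icc 1 (2 * n)) ×ˢ (Finset.Icc 1 (2 * n))).filter
        (fun q => q.1 < q.2 ∧ q.1 % 2 ≠ q.2 % 2), r q.1 q.2 ^ (-α)) =
    (((∑ q ∈ ((Finset.Icc 3 (2 * n)) ×ˢ (Finset.Icc 3 (2 * n))).filter
        (fun q => q.1 < q.2 ∧ q.1 % 2 = q.2 % 2), r q.1 q.2 ^ (-α)) -
      ∑ q ∈ ((Finset.Icc 3 (2 * n)) ×ˢ (Finset.Icc 3 (2 * n))).filter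
        (fun q => q.1 < q.2 ∧ q.1 % 2 ≠ q.2 % 2), r q.1 q.2 ^ (-α)) +
      ∑ j ∈ Finset.Icc 2 n,
        (r 1 (2 * j - 1) ^ (-α) + r 2 (2 * j) ^ (-α) -
          r 2 (2 * j - 1) ^ (-α) - r 1 (2 * j) ^ (-α))) -
      r 1 2 ^ (-α) := by
  rw [sum_filter_parity_sub_eq_paritySum (fun p s => r p s ^ (-α)),
    sum_filter_parity_sub_eq_paritySum (fun p s => r p s ^ (-α))]
  exact paritySum_Icc_one _ (by omega)

/-- Decomposition identity for the `2n`-gon parity sum: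
`R(G{1,…,2n}) = R(G{3,…,2n}) + Σ_{j=2}^{n} S(G{1,2,2j−1,2j}) − 1/r₁₂^α`,
valid for any symmetric positive array `r` and `α > 0`. -/
theorem stmt_10 (n : ℕ) (hn : 2 ≤ n) (α : ℝ) (hα : 0 < α) (r : ℕ → ℕ → ℝ)
    (hsymm : ∀ p s, r p s = r s p) (hpos : ∀ p s, p ≠ s → 0 < r p s) :
    ((∑ q ∈ ((Finset.Icc 1 (2 * n)) ×ˢ (Finset.Icc 1 (2 * n))).filter
        (fun q => q.1 < q.2 ∧ q.1 % 2 = q.2 % 2), r q.1 q.2 ^ (-α)) -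
      ∑ q ∈ ((Finset.Icc 1 (2 * n)) ×ˢ (Finset.Icc 1 (2 * n))).filter
        (fun q => q.1 < q.2 ∧ q.1 % 2 ≠ q.2 % 2), r q.1 q.2 ^ (-α)) =
    (((∑ q ∈ ((Finset.Icc 3 (2 * n)) ×ˢ (Finset.Icc 3 (2 * n))).filter
        (fun q => q.1 < q.2 ∧ q.1 % 2 = q.2 % 2), r q.1 q.2 ^ (-α)) -
      ∑ q ∈ ((Finset.Icc 3 (2 * n)) ×ˢ (Finset.Icc 3 (2 * n))).filter
        (fun q => q.1 < q.2 ∧ q.1 % 2 ≠ q.2 % 2), r q.1 q.2 ^ (-α)) +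
      ∑ j ∈ Finset.Icc 2 n,
        (r 1 (2 * j - 1) ^ (-α) + r 2 (2 * j) ^ (-α) -
          r 2 (2 * j - 1) ^ (-α) - r 1 (2 * j) ^ (-α))) -
      r 1 2 ^ (-α) :=
  stmt_10_general n hn α r
end

section
/- For a mass vector m = (1,…,1,m_k,1,…,1,m_n) with m_k ≠ 1 at position k < n and m_n ≠ 1 at position n, where n is odd, the reflection S ∈ D_n (the permutation i ↦ n−i for i < n, fixing n) satisfies: S·m − m is a vector supported on two coordinates with values ±(m_k − 1), and consequently the quadratic form H(S·m − m) = −2(m_k−1)²/r^α < 0, where r is the distance between the positions k and n−k. -/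
/-! Since `n` is odd, `k ≠ n - k`, and `S·m - m` vanishes off these two coordinates. As `H` is
symmetric with zero diagonal, the quadratic form then collapses to `2 v_k H_{k,n-k} v_{n-k}`.
The chord length is positive because two distinct angles in `(0, 2π]` differ by less than `2π`. -/

open Finset Real

theorem sum_sum_eq_two_mul_of_eq_zero_off_pair {ι R : Type*} [DecidableEq ι] [CommSemiring R]
    {s : Finset ι} {a b : ι} (hab : a ≠ b) (ha : a ∈ s) (hb : b ∈ s)
    (v : ι → R) (H : ι → ι → R) (hv : ∀ i ∈ s, i ≠ a → i ≠ b → v i = 0)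
    (hHa : H a a = 0) (hHb : H b b = 0) (hsymm : H b a = H a b) :
    ∑ i ∈ s, ∑ j ∈ s, v i * H i j * v j = 2 * v a * H a b * v b := by
  have hpair : ({a, b} : Finset ι) ⊆ s := insert_subset ha (singleton_subset_iff.mpr hb)
  have hoff : ∀ i ∈ s, i ∉ ({a, b} : Finset ι) → v i = 0 := fun i hi hi' =>
    hv i hi (fun h => hi' (by simp [h])) (fun h => hi' (by simp [h]))
  have hrestrict : ∀ f : ι → R, (∀ i ∈ s, v i = 0 → f i = 0) →
      ∑ i ∈ s, f i = ∑ i ∈ {a, b}, f i := fun f hf =>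
    (sum_subset hpair fun i hi hi' => hf i hi (hoff i hi hi')).symm
  rw [hrestrict _ fun i _ hi => sum_eq_zero fun j _ => by rw [hi, zero_mul, zero_mul]]
  rw [sum_congr rfl fun i _ => hrestrict (fun j => v i * H i j * v j) fun j _ hj => by
    rw [hj, mul_zero]]
  rw [sum_pair hab, sum_pair hab, sum_pair hab, hHa, hHb, hsymm]
  ring

theorem sin_half_sub_ne_zero {a b : ℝ} (ha : 0 < a) (ha' : a ≤ 2 * π) (hb : 0 < b)
    (hb' : b ≤ 2 * π) (hab : a ≠ b) : sin ((a - b) / 2) ≠ 0 := by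
  rw [Ne, sin_eq_zero_iff_of_lt_of_lt (by linarith) (by linarith)]
  exact fun h => hab (by linarith)

theorem reflection_sub_of_two_defects {n k : ℕ} (hk1 : 1 ≤ k) (hkn : k < n) (hkb : k ≠ n - k)
    {m v : ℕ → ℝ} (hmass : ∀ i ∈ Icc 1 n, i ≠ k → i ≠ n → m i = 1)
    (hv : ∀ i ∈ Icc 1 n, v i = m (if i = n then n else n - i) - m i) :
    (∀ i ∈ Icc 1 n, i ≠ k → i ≠ n - k → v i = 0) ∧
    v k = 1 - m k ∧ v (n - k) = m k - 1 := by
  have hbmem : n - k ∈ Icc 1 n := mem_Icc.mpr ⟨by omega, by omega⟩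
  have hmb : m (n - k) = 1 := hmass _ hbmem hkb.symm (by omega)
  refine ⟨fun i hi hik hib => ?_, ?_, ?_⟩
  · rw [hv i hi]
    rcases eq_or_ne i n with rfl | hin
    · simp
    · have hi' := mem_Icc.mp hi
      rw [if_neg hin, hmass i hi hik hin,
        hmass (n - i) (mem_Icc.mpr ⟨by omega, by omega⟩) (by omega) (by omega), sub_self]
  · rw [hv k (mem_Icc.mpr ⟨hk1, hkn.le⟩), if_neg hkn.ne, hmb]
  · rw [hv _ hbmem, if_neg (by omega), Nat.sub_sub_self hkn.le, hmb]

theorem stmt_11_general (n k : ℕ) (α : ℝ) (hodd : Odd n)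
    (hk1 : 1 ≤ k) (hkn : k < n)
    (m θ : ℕ → ℝ)
    (hmass : ∀ i ∈ Finset.Icc 1 n, i ≠ k → i ≠ n → m i = 1)
    (hmk : m k ≠ 1)
    (hθ0 : 0 < θ 1) (hθmono : StrictMonoOn θ (Set.Icc 1 n)) (hθn : θ n = 2 * Real.pi)
    (H : ℕ → ℕ → ℝ)
    (hH : ∀ i j, H i j = if i = j then 0 else (2 * |Real.sin ((θ i - θ j) / 2)|) ^ (-α))
    (v : ℕ → ℝ)
    (hv : ∀ i ∈ Finset.Icc 1 n, v i = m (if i = n then n else n - i) - m i) :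
    (∀ i ∈ Finset.Icc 1 n, i ≠ k → i ≠ n - k → v i = 0) ∧
    v k = 1 - m k ∧ v (n - k) = m k - 1 ∧
    (∑ i ∈ Finset.Icc 1 n, ∑ j ∈ Finset.Icc 1 n, v i * H i j * v j) =
      -2 * (m k - 1) ^ 2 * (2 * |Real.sin ((θ k - θ (n - k)) / 2)|) ^ (-α) ∧
    (∑ i ∈ Finset.Icc 1 n, ∑ j ∈ Finset.Icc 1 n, v i * H i j * v j) < 0 := by
  have hkb : k ≠ n - k := by obtain ⟨t, rfl⟩ := hodd; omega
  obtain ⟨hzero, hvk, hvb⟩ := reflection_sub_of_two_defects hk1 hkn hkb hmass hv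
  have hkS : k ∈ Set.Icc 1 n := ⟨hk1, hkn.le⟩
  have hbS : n - k ∈ Set.Icc 1 n := ⟨by omega, by omega⟩
  have h1S : 1 ∈ Set.Icc 1 n := ⟨le_rfl, by omega⟩
  have hnS : n ∈ Set.Icc 1 n := ⟨by omega, le_rfl⟩
  have hmono := hθmono.monotoneOn
  have hsin : sin ((θ k - θ (n - k)) / 2) ≠ 0 :=
    sin_half_sub_ne_zero (hθ0.trans_le (hmono h1S hkS hk1)) (hθn ▸ hmono hkS hnS hkn.le)
      (hθ0.trans_le (hmono h1S hbS (by omega))) (hθn ▸ hmono hbS hnS (by omega))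
      (hθmono.injOn.ne hkS hbS hkb)
  have hsymm : H (n - k) k = H k (n - k) := by
    rw [hH, hH, if_neg hkb.symm, if_neg hkb, ← neg_sub, neg_div, sin_neg, abs_neg]
  have hsum : ∑ i ∈ Icc 1 n, ∑ j ∈ Icc 1 n, v i * H i j * v j
      = -2 * (m k - 1) ^ 2 * (2 * |sin ((θ k - θ (n - k)) / 2)|) ^ (-α) := by
    rw [sum_sum_eq_two_mul_of_eq_zero_off_pair hkb (mem_Icc.mpr hkS) (mem_Icc.mpr hbS) v H hzero
      (by simp [hH]) (by simp [hH]) hsymm, hvk, hvb, hH, if_neg hkb]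
    ring
  have hpow : 0 < (2 * |sin ((θ k - θ (n - k)) / 2)|) ^ (-α) := by positivity
  have hsq : 0 < (m k - 1) ^ 2 := by
    have : m k - 1 ≠ 0 := sub_ne_zero.mpr hmk
    positivity
  refine ⟨hzero, hvk, hvb, hsum, ?_⟩
  rw [hsum]
  linarith [mul_pos hsq hpow]

/-- For `n` odd and a mass vector with all masses 1 except `m_k ≠ 1` (at `k < n`) and
`m_n ≠ 1`, the reflection `S : i ↦ n − i` (fixing `n`) yields a vector `v = S·m − m`
supported on coordinates `k` and `n − k` with values `±(m_k − 1)`, and the quadratic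
form satisfies `vᵀHv = −2(m_k − 1)²/r_{k,n−k}^α < 0`. -/
theorem stmt_11 (n k : ℕ) (α : ℝ) (hα : 0 < α) (hodd : Odd n)
    (hk1 : 1 ≤ k) (hkn : k < n)
    (m θ : ℕ → ℝ)
    (hmass : ∀ i ∈ Finset.Icc 1 n, i ≠ k → i ≠ n → m i = 1)
    (hmk : m k ≠ 1) (hmn : m n ≠ 1)
    (hθ0 : 0 < θ 1) (hθmono : StrictMonoOn θ (Set.Icc 1 n)) (hθn : θ n = 2 * Real.pi)
    (H : ℕ → ℕ → ℝ)
    (hH : ∀ i j, H i j = if i = j then 0 else (2 * |Real.sin ((θ i - θ j) / 2)|) ^ (-α))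
    (v : ℕ → ℝ)
    (hv : ∀ i ∈ Finset.Icc 1 n, v i = m (if i = n then n else n - i) - m i) :
    (∀ i ∈ Finset.Icc 1 n, i ≠ k → i ≠ n - k → v i = 0) ∧
    v k = 1 - m k ∧ v (n - k) = m k - 1 ∧
    (∑ i ∈ Finset.Icc 1 n, ∑ j ∈ Finset.Icc 1 n, v i * H i j * v j) =
      -2 * (m k - 1) ^ 2 * (2 * |Real.sin ((θ k - θ (n - k)) / 2)|) ^ (-α) ∧
    (∑ i ∈ Finset.Icc 1 n, ∑ j ∈ Finset.Icc 1 n, v i * H i j * v j) < 0 :=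
  stmt_11_general n k α hodd hk1 hkn m θ hmass hmk hθ0 hθmono hθn H hH v hv
end

section
/- Let H_m be the matrix of inverse α-th power mutual distances at the minimizing configuration θ_m of U_α(m, ·), and let g be a permutation of the mass vector m. If H_m m = λ'𝟙, Σ(gm − m)ᵢ = 0, and U_α(gm, θ_{gm}) = U_α(m, θ_m) with θ_{gm} the minimizer for gm, then (gm − m)ᵀH_m(gm − m) ≥ 0. -/
open Matrix

/-- Wang's criterion (contrapositive form): if `(m, θ_m)` is a centered co-circular
central configuration, i.e. `H_m m = λ'·𝟙` with `θ_m` the minimizer, and `g` is a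
permutation of the masses with `θ_{gm}` the minimizer for `gm` and
`U_α(gm, θ_{gm}) = U_α(m, θ_m)`, then `(gm − m)ᵀH_m(gm − m) ≥ 0`. -/
theorem stmt_15 (n : ℕ) (α lam : ℝ) (hα : 0 < α)
    (m : Fin n → ℝ) (hm : ∀ i, 0 < m i)
    (g : Equiv.Perm (Fin n)) (θm θgm : Fin n → ℝ)
    (U : (Fin n → ℝ) → (Fin n → ℝ) → ℝ)
    (hU : U = fun mass θ =>
      ∑ q ∈ Finset.univ.filter (fun q : Fin n × Fin n => q.1 < q.2),
        mass q.1 * mass q.2 * (2 * |Real.sin ((θ q.1 - θ q.2) / 2)|) ^ (-α))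
    (H : Matrix (Fin n) (Fin n) ℝ)
    (hH : H = fun i j =>
      if i = j then 0 else (2 * |Real.sin ((θm i - θm j) / 2)|) ^ (-α))
    (hcrit : H.mulVec m = fun _ => lam)
    (hsum : ∑ i, (m (g i) - m i) = 0)
    (hmin : U (fun i => m (g i)) θgm ≤ U (fun i => m (g i)) θm)
    (heq : U (fun i => m (g i)) θgm = U m θm) :
    0 ≤ (fun i => m (g i) - m i) ⬝ᵥ H.mulVec (fun i => m (g i) - m i) := by
  classical
  set gm : Fin n → ℝ := fun i => m (g i) with hgm
  have hsym : ∀ i j, H i j = H j i := by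
    intro i j
    by_cases h : i = j
    · subst h; rfl
    · simp only [hH, if_neg h, if_neg (Ne.symm h)]
      rw [show θm i - θm j = -(θm j - θm i) by ring, neg_div, Real.sin_neg, abs_neg]
  have hdiag : ∀ i, H i i = 0 := by intro i; simp [hH]
  have hUval : ∀ x : Fin n → ℝ, U x θm
      = ∑ q ∈ Finset.univ.filter (fun q : Fin n × Fin n => q.1 < q.2),
          x q.1 * H q.1 q.2 * x q.2 := by
    intro x
    rw [hU]
    refine Finset.sum_congr rfl fun q hq => ?_
    simp only [Finset.mem_filter, Finset.mem_univ, true_and] at hq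
    rw [hH]
    simp only [if_neg (ne_of_lt hq)]
    ring
  -- quadratic form identity
  have key : ∀ x : Fin n → ℝ, x ⬝ᵥ H.mulVec x = 2 * U x θm := by
    intro x
    have e1 : x ⬝ᵥ H.mulVec x
        = ∑ q ∈ (Finset.univ : Finset (Fin n × Fin n)),
            x q.1 * H q.1 q.2 * x q.2 := by
      rw [← Finset.univ_product_univ, Finset.sum_product]
      simp [dotProduct, mulVec, Finset.mul_sum, mul_assoc]
    rw [e1, ← Finset.sum_filter_add_sum_filter_not Finset.univ
        (fun q : Fin n × Fin n => q.1 < q.2)]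
    have e3 : ∑ q ∈ Finset.univ.filter (fun q : Fin n × Fin n => ¬ q.1 < q.2),
        x q.1 * H q.1 q.2 * x q.2
        = ∑ q ∈ Finset.univ.filter (fun q : Fin n × Fin n => q.2 < q.1),
        x q.1 * H q.1 q.2 * x q.2 := by
      symm
      apply Finset.sum_subset
      · intro q hq
        simp only [Finset.mem_filter, Finset.mem_univ, true_and] at hq ⊢
        exact not_lt_of_gt hq
      · intro q hq1 hq2
        simp only [Finset.mem_filter, Finset.mem_univ, true_and, not_lt] at hq1 hq2
        have : q.1 = q.2 := le_antisymm hq2 hq1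
        rw [this, hdiag, mul_zero, zero_mul]
    have e4 : ∑ q ∈ Finset.univ.filter (fun q : Fin n × Fin n => q.2 < q.1),
        x q.1 * H q.1 q.2 * x q.2
        = ∑ q ∈ Finset.univ.filter (fun q : Fin n × Fin n => q.1 < q.2),
        x q.1 * H q.1 q.2 * x q.2 := by
      refine Finset.sum_nbij' (fun q : Fin n × Fin n => (q.2, q.1))
        (fun q : Fin n × Fin n => (q.2, q.1)) ?_ ?_ ?_ ?_ ?_
      · intro q hq; simp only [Finset.mem_filter, Finset.mem_univ, true_and] at hq ⊢; exact hq
      · intro q hq; simp only [Finset.mem_filter, Finset.mem_univ, true_and] at hq ⊢; exact hq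
      · intro q _; rfl
      · intro q _; rfl
      · intro q _; simp only; rw [hsym]; ring
    rw [e3, e4, hUval]
    ring
  -- cross terms
  have hT : Hᵀ = H := Matrix.ext fun i j => hsym j i
  have hsymm : ∀ y, H.vecMul y = H.mulVec y := by
    intro y
    rw [← Matrix.mulVec_transpose, hT]
  have hgmsum : ∑ i, gm i = ∑ i, m i := by
    have := hsum
    rw [Finset.sum_sub_distrib] at this
    linarith
  have c1 : gm ⬝ᵥ H.mulVec m = lam * ∑ i, m i := by
    rw [hcrit]
    simp only [dotProduct]
    rw [← hgmsum, Finset.mul_sum]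
    exact Finset.sum_congr rfl fun i _ => mul_comm _ _
  have c2 : m ⬝ᵥ H.mulVec gm = lam * ∑ i, m i := by
    rw [Matrix.dotProduct_mulVec, hsymm m, hcrit]
    simp only [dotProduct]
    rw [← hgmsum, Finset.mul_sum]
  have c3 : m ⬝ᵥ H.mulVec m = lam * ∑ i, m i := by
    rw [hcrit]
    simp only [dotProduct]
    rw [Finset.mul_sum]
    exact Finset.sum_congr rfl fun i _ => mul_comm _ _
  have expand : (fun i => m (g i) - m i) ⬝ᵥ H.mulVec (fun i => m (g i) - m i)
      = gm ⬝ᵥ H.mulVec gm - gm ⬝ᵥ H.mulVec m - m ⬝ᵥ H.mulVec gm + m ⬝ᵥ H.mulVec m := by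
    have : (fun i => m (g i) - m i) = gm - m := rfl
    rw [this, Matrix.mulVec_sub, sub_dotProduct, dotProduct_sub,
      dotProduct_sub]
    ring
  rw [expand, c1, c2, c3, key gm]
  have h1 : lam * ∑ i, m i = 2 * U m θm := by rw [← c3, key m]
  have h2 : U gm θm ≥ U m θm := heq ▸ hmin
  linarith
end

section
/- For a cyclic 2k-gon with vertices ordered counterclockwise on a circle and chord lengths r_{ps}, the parity-alternating sum R = Σ_{p<s, p≡s (mod 2)} r_{ps}^{-α} − Σ_{p<s, p≢s (mod 2)} r_{ps}^{-α} is strictly negative for all α > 0 and all k ≥ 2; consequently, in the power-law n-body problem, if the mass vector consists of two groups of equal masses (values 1 and m ≠ 1), then for the cyclic shift g = P, the quadratic form H_m(gm − m) = 2(m−1)²·R < 0, ruling out centered co-circular central configurations. -/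
/-!
For angles `0 ≤ x < y < 2π` the chord is `2 sin ((y - x) / 2)`, and `t ↦ (2 sin t)^(-α)` is
strictly convex on `(0, π)`: a decreasing convex function of a strictly concave one. For four
vertices `a < b < c < d` the half-arcs `(c - b)/2 < (c - a)/2, (d - b)/2 < (d - a)/2` have equal
sums, so convexity gives the quadrilateral inequality `r_ac⁻ᵅ + r_bd⁻ᵅ < r_bc⁻ᵅ + r_ad⁻ᵅ`.
Grouping the `2k` vertices into consecutive pairs, `R` is a sum of the negative terms
`-r_{2j,2j+1}⁻ᵅ` and of one quadrilateral difference for each two pairs, hence negative.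
The identity for the quadratic form is a direct expansion: `v` equals `±(m₀ - 1)` on the selected
vertices, and `H` is symmetric with zero diagonal.
-/

open Matrix Real Set Finset

theorem convexOn_rpow_neg {α : ℝ} (hα : 0 ≤ α) : ConvexOn ℝ (Ioi 0) fun x : ℝ => x ^ (-α) := by
  refine ⟨convex_Ioi 0, fun u hu v hv a b ha hb hab => ?_⟩
  have huv : 0 < a • u + b • v := convex_Ioi 0 hu hv ha hb hab
  have hlog : a • log u + b • log v ≤ log (a • u + b • v) :=
    strictConcaveOn_log_Ioi.concaveOn.2 hu hv ha hb hab
  simp only [smul_eq_mul] at huv hlog ⊢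
  rw [rpow_def_of_pos huv, rpow_def_of_pos hu, rpow_def_of_pos hv]
  calc exp (log (a * u + b * v) * -α) ≤ exp (a • (log u * -α) + b • (log v * -α)) := by
        rw [exp_le_exp, smul_eq_mul, smul_eq_mul]; nlinarith
    _ ≤ a • exp (log u * -α) + b • exp (log v * -α) :=
        convexOn_exp.2 (mem_univ _) (mem_univ _) ha hb hab

theorem strictConvexOn_two_mul_sin_rpow_neg {α : ℝ} (hα : 0 < α) :
    StrictConvexOn ℝ (Ioo 0 π) fun t => (2 * sin t) ^ (-α) := by
  refine ⟨convex_Ioo 0 π, fun x hx y hy hxy a b ha hb hab => ?_⟩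
  have hpos : ∀ t ∈ Ioo 0 π, 0 < 2 * sin t := fun t ht => by
    have := sin_pos_of_pos_of_lt_pi ht.1 ht.2; positivity
  have hsin : a • sin x + b • sin y < sin (a • x + b • y) :=
    strictConcaveOn_sin_Icc.2 (Ioo_subset_Icc_self hx) (Ioo_subset_Icc_self hy) hxy ha hb hab
  simp only [smul_eq_mul] at hsin ⊢
  calc (2 * sin (a * x + b * y)) ^ (-α) < (a * (2 * sin x) + b * (2 * sin y)) ^ (-α) :=
        rpow_lt_rpow_of_neg (by nlinarith [hpos x hx, hpos y hy]) (by linarith) (by linarith)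
    _ ≤ a * (2 * sin x) ^ (-α) + b * (2 * sin y) ^ (-α) :=
        (convexOn_rpow_neg hα.le).2 (hpos x hx) (hpos y hy) ha.le hb.le hab

theorem StrictConvexOn.add_lt_add_of_add_eq_s19 {s : Set ℝ} {g : ℝ → ℝ} (hg : StrictConvexOn ℝ s g)
    {A B C D : ℝ} (hA : A ∈ s) (hD : D ∈ s) (hDB : D < B) (hBA : B < A) (hsum : B + C = D + A) :
    g B + g C < g D + g A := by
  set l := (A - B) / (A - D)
  have hl : l * (A - D) = A - B := div_mul_cancel₀ _ (by linarith)
  have hl0 : 0 < l := div_pos (by linarith) (by linarith)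
  have hl1 : l < 1 := (div_lt_one (by linarith)).2 (by linarith)
  have hB := hg.2 hD hA (hDB.trans hBA).ne hl0 (sub_pos.2 hl1) (add_sub_cancel l 1)
  have hC := hg.2 hD hA (hDB.trans hBA).ne (sub_pos.2 hl1) hl0 (sub_add_cancel 1 l)
  rw [show l • D + (1 - l) • A = B by simp only [smul_eq_mul]; linarith] at hB
  rw [show (1 - l) • D + l • A = C by simp only [smul_eq_mul]; linarith] at hC
  simp only [smul_eq_mul] at hB hC
  linarith

/-- `r⁻ᵅ` for the chord `r` joining the points at angles `x` and `y` on the unit circle. -/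
noncomputable def chordWeight (α x y : ℝ) : ℝ := (2 * |sin ((x - y) / 2)|) ^ (-α)

theorem chordWeight_comm (α x y : ℝ) : chordWeight α x y = chordWeight α y x := by
  rw [chordWeight, chordWeight, ← abs_neg, ← sin_neg, ← neg_div, neg_sub]

theorem chordWeight_eq_of_lt {α x y : ℝ} (hx : 0 ≤ x) (hxy : x < y) (hy : y < 2 * π) :
    chordWeight α x y = (2 * sin ((y - x) / 2)) ^ (-α) := by
  rw [chordWeight_comm, chordWeight,
    abs_of_pos (sin_pos_of_pos_of_lt_pi (by linarith) (by linarith))]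

theorem chordWeight_pos_of_lt {α x y : ℝ} (hx : 0 ≤ x) (hxy : x < y) (hy : y < 2 * π) :
    0 < chordWeight α x y := by
  rw [chordWeight_eq_of_lt hx hxy hy]
  have := sin_pos_of_pos_of_lt_pi (x := (y - x) / 2) (by linarith) (by linarith)
  positivity

theorem chordWeight_add_lt_add {α a b c d : ℝ} (hα : 0 < α) (ha : 0 ≤ a) (hab : a < b)
    (hbc : b < c) (hcd : c < d) (hd : d < 2 * π) :
    chordWeight α a c + chordWeight α b d < chordWeight α b c + chordWeight α a d := by
  rw [chordWeight_eq_of_lt ha (hab.trans hbc) (hcd.trans hd),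
    chordWeight_eq_of_lt (ha.trans hab.le) (hbc.trans hcd) hd,
    chordWeight_eq_of_lt (ha.trans hab.le) hbc (hcd.trans hd),
    chordWeight_eq_of_lt ha (hab.trans (hbc.trans hcd)) hd]
  exact (strictConvexOn_two_mul_sin_rpow_neg hα).add_lt_add_of_add_eq_s19
    ⟨by linarith, by linarith⟩ ⟨by linarith, by linarith⟩ (by linarith) (by linarith) (by ring)

theorem Finset.sum_range_two_mul {M : Type*} [AddCommMonoid M] (K : ℕ) (f : ℕ → M) :
    ∑ i ∈ range (2 * K), f i = ∑ j ∈ range K, (f (2 * j) + f (2 * j + 1)) := by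
  induction K with
  | zero => simp
  | succ K ih =>
    rw [mul_add, mul_one, sum_range_succ, sum_range_succ, sum_range_succ, ih, add_assoc]

theorem Fin.sum_filter_lt_eq_sum_range {M : Type*} [AddCommMonoid M] (n : ℕ) (g : ℕ → ℕ → M) :
    ∑ q ∈ univ.filter (fun q : Fin n × Fin n => q.1 < q.2), g q.1 q.2
      = ∑ s ∈ range n, ∑ p ∈ range s, g p s := by
  rw [sum_filter, Fintype.sum_prod_type, sum_comm, ← Fin.sum_univ_eq_sum_range]
  refine sum_congr rfl fun s _ => ?_
  simp only [Fin.lt_def]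
  rw [Fin.sum_univ_eq_sum_range (fun p => if p < (s : ℕ) then g p s else 0), ← sum_filter]
  congr 1
  ext p
  simp only [Finset.mem_filter, Finset.mem_range]
  omega

theorem sum_sum_eq_two_nsmul_sum_filter_lt {ι M : Type*} [Fintype ι] [LinearOrder ι]
    [AddCommMonoid M] {f : ι → ι → M} (hsymm : ∀ i j, f i j = f j i) (hdiag : ∀ i, f i i = 0) :
    ∑ i, ∑ j, f i j = 2 • ∑ q ∈ univ.filter (fun q : ι × ι => q.1 < q.2), f q.1 q.2 := by
  calc ∑ i, ∑ j, f i j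
      = ∑ i, ∑ j, ((if i < j then f i j else 0) + (if j < i then f j i else 0)) := by
        refine sum_congr rfl fun i _ => sum_congr rfl fun j _ => ?_
        rcases lt_trichotomy i j with h | rfl | h
        · rw [if_pos h, if_neg h.not_gt, add_zero]
        · rw [if_neg (lt_irrefl i), hdiag, add_zero]
        · rw [if_neg h.not_gt, if_pos h, zero_add, hsymm]
    _ = 2 • ∑ q ∈ univ.filter (fun q : ι × ι => q.1 < q.2), f q.1 q.2 := by
        simp only [sum_add_distrib]
        rw [sum_comm (f := fun i j => if j < i then f j i else 0), ← two_nsmul, sum_filter,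
          Fintype.sum_prod_type]

theorem Finset.sum_filter_and_sub_sum_filter_and_not {β R : Type*} [Ring R] (s : Finset β)
    (P Q : β → Prop) [DecidablePred P] [DecidablePred Q] (f : β → R) :
    ∑ x ∈ s.filter (fun x => P x ∧ Q x), f x - ∑ x ∈ s.filter (fun x => P x ∧ ¬ Q x), f x
      = ∑ x ∈ s.filter P, (if Q x then 1 else -1) * f x := by
  simp only [sum_filter, ← sum_sub_distrib]
  refine sum_congr rfl fun x _ => ?_
  by_cases hP : P x <;> by_cases hQ : Q x <;> simp [hP, hQ]

theorem dotProduct_mulVec_sum_ite {m n R : Type*} [Fintype m] [Fintype n] [DecidableEq n]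
    [CommSemiring R] (ι : m → n) (c : m → R) (H : Matrix n n R) :
    (fun t => ∑ p, if ι p = t then c p else 0) ⬝ᵥ H *ᵥ (fun t => ∑ p, if ι p = t then c p else 0)
      = ∑ p, ∑ q, c p * c q * H (ι p) (ι q) := by
  have hdot : ∀ w : n → R, (fun t => ∑ p, if ι p = t then c p else 0) ⬝ᵥ w
      = ∑ p, c p * w (ι p) := fun w => by
    simp only [dotProduct, sum_mul, ite_mul, zero_mul]
    rw [sum_comm]
    simp
  rw [hdot]
  refine sum_congr rfl fun p _ => ?_
  rw [mulVec, dotProduct_comm, hdot, mul_sum]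
  exact sum_congr rfl fun q _ => by ring

def paritySign (p s : ℕ) : ℝ := if p % 2 = s % 2 then 1 else -1

theorem paritySign_comm (p s : ℕ) : paritySign p s = paritySign s p := by
  simp only [paritySign, eq_comm]

theorem ite_mul_ite_eq_sq_mul_paritySign (a : ℝ) (p q : ℕ) :
    (if p % 2 = 0 then a - 1 else 1 - a) * (if q % 2 = 0 then a - 1 else 1 - a)
      = (a - 1) ^ 2 * paritySign p q := by
  rcases Nat.mod_two_eq_zero_or_one p with hp | hp <;>
    rcases Nat.mod_two_eq_zero_or_one q with hq | hq <;>
    simp only [paritySign, hp, hq, if_true, if_false, one_ne_zero, zero_ne_one] <;> ring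

/-- Group the `2K` indices into the blocks `{2j, 2j+1}`: the pair inside a block carries sign
`-1`, and the four pairs between two blocks form a quadrilateral. -/
theorem sum_range_paritySign_mul_neg {w : ℕ → ℕ → ℝ} {K : ℕ} (hK : 0 < K)
    (hpos : ∀ p s, p < s → s < 2 * K → 0 < w p s)
    (hquad : ∀ a b c d, a < b → b < c → c < d → d < 2 * K → w a c + w b d < w b c + w a d) :
    ∑ s ∈ range (2 * K), ∑ p ∈ range s, paritySign p s * w p s < 0 := by
  rw [sum_range_two_mul]
  refine sum_neg (fun j hj => ?_) (nonempty_range_iff.2 hK.ne')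
  have hj : j < K := mem_range.1 hj
  have hblocks : ∀ i < j, (paritySign (2 * i) (2 * j) * w (2 * i) (2 * j)
      + paritySign (2 * i) (2 * j + 1) * w (2 * i) (2 * j + 1))
      + (paritySign (2 * i + 1) (2 * j) * w (2 * i + 1) (2 * j)
      + paritySign (2 * i + 1) (2 * j + 1) * w (2 * i + 1) (2 * j + 1)) < 0 := fun i hi => by
    have := hquad (2 * i) (2 * i + 1) (2 * j) (2 * j + 1) (by omega) (by omega) (by omega)
      (by omega)
    norm_num [paritySign, Nat.mul_add_mod]
    linarith
  have hinner := hpos (2 * j) (2 * j + 1) (by omega) (by omega)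
  rw [sum_range_succ _ (2 * j), ← add_assoc, ← sum_add_distrib, sum_range_two_mul]
  have : paritySign (2 * j) (2 * j + 1) = -1 := by simp [paritySign]
  rw [this]
  have := sum_nonpos fun i hi => (hblocks i (mem_range.1 hi)).le
  linarith

theorem sum_filter_lt_paritySign_mul_chordWeight_neg {K : ℕ} (hK : 0 < K) {α : ℝ} (hα : 0 < α)
    {y : Fin (2 * K) → ℝ} (hy : StrictMono y) (hrange : ∀ i, y i ∈ Ico 0 (2 * π)) :
    ∑ q ∈ univ.filter (fun q : Fin (2 * K) × Fin (2 * K) => q.1 < q.2),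
      paritySign q.1 q.2 * chordWeight α (y q.1) (y q.2) < 0 := by
  set z : ℕ → ℝ := fun n => if h : n < 2 * K then y ⟨n, h⟩ else 0
  have hz : ∀ n (hn : n < 2 * K), z n = y ⟨n, hn⟩ := fun n hn => dif_pos hn
  have hzlt : ∀ p s, p < s → s < 2 * K → z p < z s := fun p s hps hs => by
    rw [hz p (hps.trans hs), hz s hs]
    exact hy (Fin.mk_lt_mk.2 hps)
  have hz0 : ∀ n, n < 2 * K → 0 ≤ z n := fun n hn => hz n hn ▸ (hrange _).1
  have hz2π : ∀ n, n < 2 * K → z n < 2 * π := fun n hn => hz n hn ▸ (hrange _).2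
  have hsum := Fin.sum_filter_lt_eq_sum_range (2 * K)
    fun p s => paritySign p s * chordWeight α (z p) (z s)
  simp only [hz _ (Fin.isLt _), Fin.eta] at hsum
  rw [hsum]
  refine sum_range_paritySign_mul_neg hK (fun p s hps hs => ?_) fun a b c d hab hbc hcd hd => ?_
  · exact chordWeight_pos_of_lt (hz0 p (hps.trans hs)) (hzlt p s hps hs) (hz2π s hs)
  · exact chordWeight_add_lt_add hα (hz0 a (by omega)) (hzlt a b hab (by omega))
      (hzlt b c hbc (by omega)) (hzlt c d hcd hd) (hz2π d hd)

theorem stmt_19_general (N k : ℕ) (hk : 2 ≤ k) (α : ℝ) (hα : 0 < α)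
    (θ : Fin N → ℝ) (hmono : StrictMono θ) (hrange : ∀ i, θ i ∈ Set.Ico 0 (2 * Real.pi))
    (m₀ : ℝ) (hm₀ : m₀ ≠ 1)
    (ι : Fin (2 * k) → Fin N) (hι : StrictMono ι)
    (H : Matrix (Fin N) (Fin N) ℝ)
    (hH : H = fun i j =>
      if i = j then 0 else (2 * |Real.sin ((θ i - θ j) / 2)|) ^ (-α))
    (v : Fin N → ℝ)
    (hv : v = fun t => ∑ p : Fin (2 * k),
      if ι p = t then (if (p : ℕ) % 2 = 0 then m₀ - 1 else 1 - m₀) else 0)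
    (Rsum : ℝ)
    (hR : Rsum =
      (∑ q ∈ Finset.univ.filter
          (fun q : Fin (2 * k) × Fin (2 * k) => q.1 < q.2 ∧ (q.1 : ℕ) % 2 = (q.2 : ℕ) % 2),
          (2 * |Real.sin ((θ (ι q.1) - θ (ι q.2)) / 2)|) ^ (-α)) -
        ∑ q ∈ Finset.univ.filter
          (fun q : Fin (2 * k) × Fin (2 * k) => q.1 < q.2 ∧ (q.1 : ℕ) % 2 ≠ (q.2 : ℕ) % 2),
          (2 * |Real.sin ((θ (ι q.1) - θ (ι q.2)) / 2)|) ^ (-α)) :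
    Rsum < 0 ∧ v ⬝ᵥ H.mulVec v = 2 * (m₀ - 1) ^ 2 * Rsum ∧ v ⬝ᵥ H.mulVec v < 0 := by
  have hRsum : Rsum = ∑ q ∈ univ.filter (fun q : Fin (2 * k) × Fin (2 * k) => q.1 < q.2),
      paritySign q.1 q.2 * chordWeight α (θ (ι q.1)) (θ (ι q.2)) := by
    rw [hR, sum_filter_and_sub_sum_filter_and_not]
    rfl
  have hRneg : Rsum < 0 := by
    rw [hRsum]
    exact sum_filter_lt_paritySign_mul_chordWeight_neg (y := θ ∘ ι) (by omega) hα
      (hmono.comp hι) fun i => hrange (ι i)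
  have hform : v ⬝ᵥ H *ᵥ v = 2 * (m₀ - 1) ^ 2 * Rsum := by
    rw [hv, dotProduct_mulVec_sum_ite]
    simp only [ite_mul_ite_eq_sq_mul_paritySign, mul_assoc, ← mul_sum]
    have hHsymm : ∀ i j, H i j = H j i := fun i j => by
      rcases eq_or_ne i j with rfl | hij
      · rfl
      · simp only [hH, if_neg hij, if_neg hij.symm]
        exact chordWeight_comm α (θ i) (θ j)
    rw [sum_sum_eq_two_nsmul_sum_filter_lt
      (f := fun p q : Fin (2 * k) => paritySign p q * H (ι p) (ι q))
      (fun p q => by rw [paritySign_comm, hHsymm]) (fun p => by simp [hH]), hRsum, nsmul_eq_mul]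
    have hoff : ∀ q ∈ univ.filter (fun q : Fin (2 * k) × Fin (2 * k) => q.1 < q.2),
        paritySign q.1 q.2 * H (ι q.1) (ι q.2)
          = paritySign q.1 q.2 * chordWeight α (θ (ι q.1)) (θ (ι q.2)) := fun q hq => by
      simp only [hH, if_neg (hι (mem_filter.1 hq).2).ne]
      rfl
    rw [sum_congr rfl hoff]
    push_cast
    ring
  exact ⟨hRneg, hform, hform ▸ mul_neg_of_pos_of_neg (by positivity) hRneg⟩

/-- For a cyclic `2k`-gon (`k ≥ 2`) the parity-alternating sum
`R = Σ_{p<s, p≡s} r^{-α} − Σ_{p<s, p≢s} r^{-α}` is strictly negative; consequently,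
for a mass vector taking the value `m₀ ≠ 1` at `k` pairwise nonadjacent positions
`i₁ < … < i_k` among `N` bodies on the unit circle and the value `1` elsewhere, the
vector `v = Pm − m` (supported with alternating values `±(m₀−1)` on the `2k`
vertices `i₁−1, i₁, …, i_k−1, i_k`, selected here by the strictly monotone map `ι`)
satisfies `vᵀH_m v = 2(m₀−1)²·R < 0`, ruling out centered co-circular central
configurations. -/
theorem stmt_19 (N k : ℕ) (hk : 2 ≤ k) (hkN : 2 * k ≤ N) (α : ℝ) (hα : 0 < α)
    (θ : Fin N → ℝ) (hmono : StrictMono θ) (hrange : ∀ i, θ i ∈ Set.Ico 0 (2 * Real.pi))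
    (m₀ : ℝ) (hm₀ : m₀ ≠ 1)
    (ι : Fin (2 * k) → Fin N) (hι : StrictMono ι)
    (H : Matrix (Fin N) (Fin N) ℝ)
    (hH : H = fun i j =>
      if i = j then 0 else (2 * |Real.sin ((θ i - θ j) / 2)|) ^ (-α))
    (v : Fin N → ℝ)
    (hv : v = fun t => ∑ p : Fin (2 * k),
      if ι p = t then (if (p : ℕ) % 2 = 0 then m₀ - 1 else 1 - m₀) else 0)
    (Rsum : ℝ)
    (hR : Rsum =
      (∑ q ∈ Finset.univ.filter
          (fun q : Fin (2 * k) × Fin (2 * k) => q.1 < q.2 ∧ (q.1 : ℕ) % 2 = (q.2 : ℕ) % 2),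
          (2 * |Real.sin ((θ (ι q.1) - θ (ι q.2)) / 2)|) ^ (-α)) -
        ∑ q ∈ Finset.univ.filter
          (fun q : Fin (2 * k) × Fin (2 * k) => q.1 < q.2 ∧ (q.1 : ℕ) % 2 ≠ (q.2 : ℕ) % 2),
          (2 * |Real.sin ((θ (ι q.1) - θ (ι q.2)) / 2)|) ^ (-α)) :
    Rsum < 0 ∧ v ⬝ᵥ H.mulVec v = 2 * (m₀ - 1) ^ 2 * Rsum ∧ v ⬝ᵥ H.mulVec v < 0 :=
  stmt_19_general N k hk α hα θ hmono hrange m₀ hm₀ ι hι H hH v hv Rsum hR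
end
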